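/- arXiv:1407.7003 — 2 statements merged into one kernel-verified Lean document; each statement's English description precedes it below -/
import Mathlib

section
/- Let (C, d) be a graded chain complex over Z/2 with basis e_1,...,e_n, with triangular differential, and let a_{ij} := ⟨d e_i, e_j⟩. Fix k with a_{k,k+1} = 1. In the quotient of C by the subcomplex spanned by {e_k, d e_k}, the induced differential satisfies, for all i, j ∉ {k, k+1}, ⟨d̄[e_i], [e_j]⟩ = a_{i,j} + a_{i,k+1}·a_{k,j}. -/
open scoped Classical

noncomputable section

abbrev F2 := ZMod 2

/-- Coefficients of the induced differential on the quotient by the acyclic subcomplex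
spanned by `{e_k, d e_k}`: for `i, j ∉ {k, k+1}`,
`⟨d̄[e_i], [e_j]⟩ = a_{i,j} + a_{i,k+1}·a_{k,j}`. -/
theorem stmt5 {n : ℕ} (deg : Fin n → ℤ) (d : (Fin n → F2) →ₗ[F2] (Fin n → F2))
    (hd2 : ∀ x, d (d x) = 0)
    (htri : ∀ i j : Fin n, d (Pi.single i 1) j ≠ 0 → i < j)
    (hdeg : ∀ i j : Fin n, d (Pi.single i 1) j ≠ 0 → deg i = deg j + 1)
    (k : Fin n) (hk : (k : ℕ) + 1 < n)
    (hc : d (Pi.single k 1) ⟨(k : ℕ) + 1, hk⟩ = 1)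
    (i : Fin n) (hik : i ≠ k ∧ i ≠ ⟨(k : ℕ) + 1, hk⟩) :
    let k' : Fin n := ⟨(k : ℕ) + 1, hk⟩;
    let S : Submodule F2 (Fin n → F2) :=
      Submodule.span F2 {Pi.single k 1, d (Pi.single k 1)};
    let a : Fin n → Fin n → F2 := fun i j => d (Pi.single i 1) j;
    (Submodule.Quotient.mk (d (Pi.single i 1)) : (Fin n → F2) ⧸ S) =
      Submodule.Quotient.mk
        (∑ j ∈ Finset.univ.filter (fun j : Fin n => j ≠ k ∧ j ≠ k'),
          (a i j + a i k' * a k j) • Pi.single j (1 : F2)) := by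
  intro k' S a
  have hakk : a k k = 0 := by
    by_contra h
    exact absurd (htri k k h) (lt_irrefl k)
  rw [Submodule.Quotient.eq]
  have hmem : a i k • (Pi.single k 1 : Fin n → F2) + a i k' • d (Pi.single k 1) ∈ S := by
    exact Submodule.add_mem _
      (Submodule.smul_mem _ _ (Submodule.subset_span (Set.mem_insert _ _)))
      (Submodule.smul_mem _ _ (Submodule.subset_span (Set.mem_insert_of_mem _ rfl)))
  convert hmem using 1
  funext x
  have hsum : (∑ j ∈ Finset.univ.filter (fun j : Fin n => j ≠ k ∧ j ≠ k'),
      (a i j + a i k' * a k j) • Pi.single j (1 : F2)) x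
      = if x ≠ k ∧ x ≠ k' then a i x + a i k' * a k x else 0 := by
    rw [Finset.sum_apply]
    by_cases hx : x ≠ k ∧ x ≠ k'
    · rw [if_pos hx, Finset.sum_eq_single_of_mem x (by simp [hx])]
      · simp
      · intro b _ hb
        simp [Pi.single_apply, hb.symm]
    · rw [if_neg hx]
      apply Finset.sum_eq_zero
      intro b hb
      simp only [Finset.mem_filter] at hb
      have : b ≠ x := fun h => hx (h ▸ hb.2)
      simp [Pi.single_apply, this]
  simp only [Pi.sub_apply, Pi.add_apply, Pi.smul_apply, smul_eq_mul, hsum]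
  have hneg : ∀ c : F2, -c = c := by decide
  have hkk' : (k' : Fin n) ≠ k := by
    intro h
    have := congrArg Fin.val h
    simp only [k'] at this
    omega
  by_cases h1 : x = k
  · rw [h1]
    rw [if_neg (by simp)]
    simp [Pi.single_apply, hakk]
    rw [show d (Pi.single k 1) k = 0 from hakk, mul_zero, add_zero]
  · by_cases h2 : x = k'
    · rw [h2]
      rw [if_neg (by simp)]
      simp [Pi.single_apply, hkk', hc]
      rw [show d (Pi.single k 1) k' = 1 from hc, mul_one]
    · rw [if_pos ⟨h1, h2⟩]
      simp only [Pi.single_apply, if_neg (fun h : x = k => h1 h), a]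
      rw [sub_add_eq_sub_sub, sub_self, zero_sub, hneg]
      simp
end
end

section
/- Let (A, ∂) be a DGA over Z/2 and (S(A), ∂') its stabilization by generators x (degree m) and y (degree m-1) with ∂'x = y. Two augmentations ε₁, ε₂ of S(A) are chain homotopic if and only if their restrictions to A are chain homotopic. Consequently, restriction induces a bijection between homotopy classes of augmentations of S(A) and homotopy classes of augmentations of A. -/
open scoped Classical

noncomputable section

abbrev FreeDGA (n : ℕ) := MonoidAlgebra F2 (FreeMonoid (Fin n))

/-- The generator `q_i` as an element of the free algebra. -/
def genr {n : ℕ} (q : Fin n) : FreeDGA n := MonoidAlgebra.single (FreeMonoid.of q) 1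

/-- Degree of a word: sum of the degrees of its letters. -/
def wdeg {n : ℕ} (deg : Fin n → ℤ) (w : FreeMonoid (Fin n)) : ℤ :=
  (FreeMonoid.toList w |>.map deg).sum

/-- A free DGA over `Z/2` on `n` graded generators with a degree `-1` differential
satisfying `∂² = 0` and the Leibniz rule. -/
structure DGA (n : ℕ) where
  deg : Fin n → ℤ
  d : FreeDGA n →ₗ[F2] FreeDGA n
  d_sq : ∀ x, d (d x) = 0
  leibniz : ∀ a b, d (a * b) = d a * b + a * d b
  d_deg : ∀ (q : Fin n) (w : FreeMonoid (Fin n)), (d (genr q)).coeff w ≠ 0 → wdeg deg w = deg q - 1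

/-- An augmentation: an algebra map to `Z/2` with `ε∘∂ = 0` (and `ε 1 = 1`, automatic for
algebra maps) that vanishes on generators of nonzero degree. -/
structure Aug {n : ℕ} (A : DGA n) where
  eps : FreeDGA n →ₐ[F2] F2
  aug_d : ∀ x, eps (A.d x) = 0
  aug_supp : ∀ q, A.deg q ≠ 0 → eps (genr q) = 0

/-- A chain homotopy from `e` to `e'`: a degree `1` linear map (vanishing on monomials of
degree `≠ -1`) with `e - e' = H∘∂` and the `(e,e')`-derivation rule (over `Z/2`, `-` is `+`). -/
def IsHomotopy {n : ℕ} (A : DGA n) (e e' : FreeDGA n →ₐ[F2] F2)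
    (H : FreeDGA n →ₗ[F2] F2) : Prop :=
  (∀ w : FreeMonoid (Fin n), wdeg A.deg w ≠ -1 → H (MonoidAlgebra.single w 1) = 0) ∧
  (∀ x, e x + e' x = H (A.d x)) ∧
  (∀ a b, H (a * b) = H a * e' b + e a * H b)

/-- The inclusion of the free algebra on `n` generators into the one on `n+2` generators
(the stabilization), induced by `Fin.castAdd 2`. -/
def inclTwo (n : ℕ) : FreeDGA n →ₐ[F2] FreeDGA (n + 2) :=
  MonoidAlgebra.mapDomainAlgHom F2 F2 (FreeMonoid.map (Fin.castAdd 2))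

/-!
Restricting a homotopy of `S(A)` to `A` gives a homotopy, and an augmentation of `A`
extends to `S(A)` by `ε x = ε y = 0`. Conversely, a homotopy `H'` between the restrictions
extends by `H x = 0`, `H y = ε₁ x + ε₂ x`: an `(ε₁, ε₂)`-derivation of a free algebra may
take arbitrary values on generators, and `ε₁ + ε₂ = H ∘ ∂` need only be checked on
generators, where it holds at `x` by the choice of `H y` and at `y` because
`∂ y = 0 = ε (∂ x) = ε y`. `H` has degree `1` because `H y ≠ 0` forces `|x| = 0`,
hence `|y| = -1`.
-/

lemma F2.eq_zero_or_eq_one (c : F2) : c = 0 ∨ c = 1 := by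
  decide +revert

section FreeDGA

variable {n : ℕ}

lemma genr_mul_single (q : Fin n) (w : FreeMonoid (Fin n)) :
    genr q * MonoidAlgebra.single w 1 = MonoidAlgebra.single (FreeMonoid.of q * w) 1 := by
  rw [genr, MonoidAlgebra.single_mul_single, one_mul]

lemma wdeg_of_mul (deg : Fin n → ℤ) (q : Fin n) (w : FreeMonoid (Fin n)) :
    wdeg deg (FreeMonoid.of q * w) = deg q + wdeg deg w := by
  simp [wdeg]

/-- There is no case for `0`: over `F2`, `0 = 1 + 1`. -/
@[elab_as_elim]
lemma FreeDGA.induction_on {motive : FreeDGA n → Prop} (a : FreeDGA n) (one : motive 1)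
    (genr_mul : ∀ q a, motive a → motive (genr q * a))
    (add : ∀ a b, motive a → motive b → motive (a + b)) : motive a := by
  have single_one : ∀ w, motive (MonoidAlgebra.single w 1) := by
    intro w
    induction w using FreeMonoid.inductionOn' with
    | one => exact one
    | of_mul q w ih => exact genr_mul_single q w ▸ genr_mul q _ ih
  have zero : motive 0 := by
    have two_eq_zero : (1 + 1 : FreeDGA n) = 0 := by
      rw [← two_smul F2, show (2 : F2) = 0 from rfl, zero_smul]
    exact two_eq_zero ▸ add 1 1 one one
  induction a using MonoidAlgebra.induction_linear with
  | zero => exact zero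
  | add a b ha hb => exact add a b ha hb
  | single w c =>
    rcases F2.eq_zero_or_eq_one c with rfl | rfl
    · simpa using zero
    · exact single_one w

lemma algHom_ext_genr {φ ψ : FreeDGA n →ₐ[F2] F2} (h : ∀ q, φ (genr q) = ψ (genr q)) :
    φ = ψ :=
  AlgHom.ext fun a => FreeDGA.induction_on a (by simp)
    (fun q a ha => by rw [map_mul, map_mul, h, ha])
    (fun a b ha hb => by rw [map_add, map_add, ha, hb])

lemma DGA.d_one (A : DGA n) : A.d 1 = 0 := by
  simpa using A.leibniz 1 1

lemma DGA.map_d_eq_zero (A : DGA n) {ε : FreeDGA n →ₐ[F2] F2}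
    (h : ∀ q, ε (A.d (genr q)) = 0) (a : FreeDGA n) : ε (A.d a) = 0 := by
  induction a using FreeDGA.induction_on with
  | one => rw [A.d_one, map_zero]
  | genr_mul q a ha =>
    rw [A.leibniz, map_add, map_mul, map_mul, h, ha, zero_mul, mul_zero, add_zero]
  | add a b ha hb => rw [map_add, map_add, ha, hb, add_zero]

lemma Aug.deg_eq_zero {A : DGA n} (e : Aug A) {q : Fin n} (h : e.eps (genr q) ≠ 0) :
    A.deg q = 0 :=
  not_imp_comm.mp (e.aug_supp q) h

lemma Aug.wdeg_eq_zero {A : DGA n} (e : Aug A) {w : FreeMonoid (Fin n)}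
    (h : e.eps (MonoidAlgebra.single w 1) ≠ 0) : wdeg A.deg w = 0 := by
  induction w using FreeMonoid.inductionOn' with
  | one => rfl
  | of_mul q w ih =>
    rw [← genr_mul_single, map_mul] at h
    rw [wdeg_of_mul, e.deg_eq_zero (left_ne_zero_of_mul h), ih (right_ne_zero_of_mul h), add_zero]

def IsTwistedDerivation (e e' : FreeDGA n →ₐ[F2] F2) (H : FreeDGA n →ₗ[F2] F2) :
    Prop :=
  ∀ a b, H (a * b) = H a * e' b + e a * H b

namespace IsTwistedDerivation

variable {e e' : FreeDGA n →ₐ[F2] F2} {H : FreeDGA n →ₗ[F2] F2}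

lemma map_one (hH : IsTwistedDerivation e e' H) : H 1 = 0 := by
  simpa using hH 1 1

lemma ext_genr {G : FreeDGA n →ₗ[F2] F2} (hH : IsTwistedDerivation e e' H)
    (hG : IsTwistedDerivation e e' G) (h : ∀ q, H (genr q) = G (genr q)) : H = G :=
  LinearMap.ext fun a => FreeDGA.induction_on a (by rw [hH.map_one, hG.map_one])
    (fun q a ha => by rw [hH, hG, h, ha]) (fun a b ha hb => by rw [map_add, map_add, ha, hb])

lemma comp {k : ℕ} (hH : IsTwistedDerivation e e' H) (f : FreeDGA k →ₐ[F2] FreeDGA n) :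
    IsTwistedDerivation (e.comp f) (e'.comp f) (H ∘ₗ f.toLinearMap) := fun a b => by
  simpa using hH (f a) (f b)

lemma add_eq_map_d {A : DGA n} {e e' : Aug A} (hH : IsTwistedDerivation e.eps e'.eps H)
    (h : ∀ q, e.eps (genr q) + e'.eps (genr q) = H (A.d (genr q))) (a : FreeDGA n) :
    e.eps a + e'.eps a = H (A.d a) := by
  induction a using FreeDGA.induction_on with
  | one => simp [A.d_one, CharTwo.add_self_eq_zero]
  | genr_mul q a ha =>
    rw [A.leibniz, map_add, hH, hH, e.aug_d, e'.aug_d, ← h, ← ha, map_mul, map_mul]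
    have two_eq_zero : (2 : F2) = 0 := rfl
    linear_combination (-(e.eps (genr q) * e'.eps a)) * two_eq_zero
  | add a b ha hb => rw [map_add, map_add, map_add, map_add, ← ha, ← hb]; ring

lemma wdeg_eq_neg_one {A : DGA n} {e e' : Aug A} (hH : IsTwistedDerivation e.eps e'.eps H)
    (hgenr : ∀ q, H (genr q) ≠ 0 → A.deg q = -1) {w : FreeMonoid (Fin n)}
    (hw : H (MonoidAlgebra.single w 1) ≠ 0) : wdeg A.deg w = -1 := by
  induction w using FreeMonoid.inductionOn' with
  | one => exact absurd hH.map_one hw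
  | of_mul q w ih =>
    rw [← genr_mul_single, hH] at hw
    rw [wdeg_of_mul]
    by_cases hq : H (genr q) * e'.eps (MonoidAlgebra.single w 1) = 0
    · rw [hq, zero_add] at hw
      rw [e.deg_eq_zero (left_ne_zero_of_mul hw), ih (right_ne_zero_of_mul hw), zero_add]
    · rw [hgenr q (left_ne_zero_of_mul hq), e'.wdeg_eq_zero (right_ne_zero_of_mul hq), add_zero]

end IsTwistedDerivation

/-- `(e, e')`-derivations are the top right entries of algebra maps to upper triangular
matrices with diagonal `(e, e')`. -/
def triangularLift (e e' : FreeDGA n →ₐ[F2] F2) (h : Fin n → F2) :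
    FreeDGA n →ₐ[F2] Matrix (Fin 2) (Fin 2) F2 :=
  MonoidAlgebra.lift F2 _ _ (FreeMonoid.lift fun q => !![e (genr q), h q; 0, e' (genr q)])

def twistedDerivationOfGenr (e e' : FreeDGA n →ₐ[F2] F2) (h : Fin n → F2) :
    FreeDGA n →ₗ[F2] F2 :=
  Matrix.entryLinearMap F2 F2 0 1 ∘ₗ (triangularLift e e' h).toLinearMap

section twistedDerivationOfGenr

variable (e e' : FreeDGA n →ₐ[F2] F2) (h : Fin n → F2)

lemma triangularLift_genr (q : Fin n) :
    triangularLift e e' h (genr q) = !![e (genr q), h q; 0, e' (genr q)] := by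
  rw [triangularLift, genr, MonoidAlgebra.lift_single, one_smul]
  rfl

lemma triangularLift_eq (a : FreeDGA n) :
    triangularLift e e' h a = !![e a, twistedDerivationOfGenr e e' h a; 0, e' a] := by
  suffices ∃ x, triangularLift e e' h a = !![e a, x; 0, e' a] by
    obtain ⟨x, hx⟩ := this
    simp [twistedDerivationOfGenr, hx]
  induction a using FreeDGA.induction_on with
  | one => exact ⟨0, by simp [Matrix.one_fin_two]⟩
  | genr_mul q a ha =>
    obtain ⟨x, hx⟩ := ha
    refine ⟨e (genr q) * x + h q * e' a, ?_⟩
    rw [map_mul, hx, triangularLift_genr, Matrix.mul_fin_two]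
    simp
  | add a b ha hb =>
    obtain ⟨x, hx⟩ := ha
    obtain ⟨y, hy⟩ := hb
    refine ⟨x + y, ?_⟩
    rw [map_add, hx, hy]
    ext i j
    fin_cases i <;> fin_cases j <;> simp

lemma twistedDerivationOfGenr_genr (q : Fin n) :
    twistedDerivationOfGenr e e' h (genr q) = h q := by
  simp [twistedDerivationOfGenr, triangularLift_genr]

lemma isTwistedDerivation_twistedDerivationOfGenr :
    IsTwistedDerivation e e' (twistedDerivationOfGenr e e' h) := fun a b => by
  have hab := congrFun₂ (triangularLift_eq e e' h (a * b)) 0 1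
  rw [map_mul, triangularLift_eq, triangularLift_eq, Matrix.mul_fin_two] at hab
  simpa [add_comm, mul_comm] using hab.symm

end twistedDerivationOfGenr

@[elab_as_elim]
lemma Fin.castAdd_two_cases {motive : Fin (n + 2) → Prop} (q : Fin (n + 2))
    (castAdd : ∀ p, motive (Fin.castAdd 2 p)) (last_pred : motive ⟨n, by simp⟩)
    (last : motive ⟨n + 1, by simp⟩) : motive q :=
  Fin.addCases castAdd (fun i => by fin_cases i; exacts [last_pred, last]) q

def extendByTwo {α : Type*} (f : Fin n → α) (x y : α) : Fin (n + 2) → α :=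
  Fin.addCases f ![x, y]

section extendByTwo

variable {α : Type*} (f : Fin n → α) (x y : α)

@[simp] lemma extendByTwo_castAdd (p : Fin n) : extendByTwo f x y (Fin.castAdd 2 p) = f p :=
  Fin.addCases_left p

@[simp] lemma extendByTwo_last_pred : extendByTwo f x y ⟨n, by simp⟩ = x :=
  Fin.addCases_right (0 : Fin 2)

@[simp] lemma extendByTwo_last : extendByTwo f x y ⟨n + 1, by simp⟩ = y :=
  Fin.addCases_right (1 : Fin 2)

end extendByTwo

lemma inclTwo_single (w : FreeMonoid (Fin n)) :
    inclTwo n (MonoidAlgebra.single w 1) =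
      MonoidAlgebra.single (FreeMonoid.map (Fin.castAdd 2) w) 1 :=
  MonoidAlgebra.mapDomain_single

@[simp] lemma inclTwo_genr (p : Fin n) : inclTwo n (genr p) = genr (Fin.castAdd 2 p) :=
  inclTwo_single _

lemma wdeg_map_castAdd {degA : Fin n → ℤ} {degB : Fin (n + 2) → ℤ}
    (hdeg : ∀ p, degB (Fin.castAdd 2 p) = degA p) (w : FreeMonoid (Fin n)) :
    wdeg degB (FreeMonoid.map (Fin.castAdd 2) w) = wdeg degA w := by
  simp [wdeg, Function.comp_def, hdeg]

lemma IsHomotopy.comp_inclTwo {A : DGA n} {B : DGA (n + 2)}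
    (hdegcompat : ∀ p, B.deg (Fin.castAdd 2 p) = A.deg p)
    (hrestrict : ∀ a, B.d (inclTwo n a) = inclTwo n (A.d a))
    {e e' : FreeDGA (n + 2) →ₐ[F2] F2} {H : FreeDGA (n + 2) →ₗ[F2] F2}
    (hH : IsHomotopy B e e' H) :
    IsHomotopy A (e.comp (inclTwo n)) (e'.comp (inclTwo n)) (H ∘ₗ (inclTwo n).toLinearMap) := by
  obtain ⟨hdeg, hd, hmul⟩ := hH
  refine ⟨fun w hw => ?_, fun a => ?_, IsTwistedDerivation.comp hmul _⟩
  · simpa [inclTwo_single] using hdeg _ (by rwa [wdeg_map_castAdd hdegcompat])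
  · simpa [← hrestrict] using hd (inclTwo n a)

lemma Aug.exists_comp_inclTwo_eq {A : DGA n} {B : DGA (n + 2)}
    (hdegcompat : ∀ p, B.deg (Fin.castAdd 2 p) = A.deg p)
    (hdx : B.d (genr ⟨n, by simp⟩) = genr ⟨n + 1, by simp⟩)
    (hdy : B.d (genr ⟨n + 1, by simp⟩) = 0)
    (hrestrict : ∀ a, B.d (inclTwo n a) = inclTwo n (A.d a)) (eA : Aug A) :
    ∃ eS : Aug B, eS.eps.comp (inclTwo n) = eA.eps := by
  let ε : FreeDGA (n + 2) →ₐ[F2] F2 := MonoidAlgebra.lift F2 F2 _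
    (FreeMonoid.lift (extendByTwo (fun p => eA.eps (genr p)) 0 0))
  have ε_genr (q) : ε (genr q) = extendByTwo (fun p => eA.eps (genr p)) 0 0 q := by
    simp [ε, genr]
  have ε_incl : ε.comp (inclTwo n) = eA.eps := algHom_ext_genr fun p => by simp [ε_genr]
  refine ⟨⟨ε, B.map_d_eq_zero fun q => ?_, fun q hq => ?_⟩, ε_incl⟩
  · induction q using Fin.castAdd_two_cases with
    | castAdd p => rw [← inclTwo_genr, hrestrict, ← AlgHom.comp_apply, ε_incl, eA.aug_d]
    | last_pred => rw [hdx, ε_genr, extendByTwo_last]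
    | last => rw [hdy, map_zero]
  · induction q using Fin.castAdd_two_cases with
    | castAdd p => rw [ε_genr, extendByTwo_castAdd, eA.aug_supp p (hdegcompat p ▸ hq)]
    | last_pred => rw [ε_genr, extendByTwo_last_pred]
    | last => rw [ε_genr, extendByTwo_last]

lemma IsHomotopy.exists_of_comp_inclTwo {m : ℤ} {A : DGA n} {B : DGA (n + 2)}
    (hdegcompat : ∀ p, B.deg (Fin.castAdd 2 p) = A.deg p)
    (hdegx : B.deg ⟨n, by simp⟩ = m) (hdegy : B.deg ⟨n + 1, by simp⟩ = m - 1)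
    (hdx : B.d (genr ⟨n, by simp⟩) = genr ⟨n + 1, by simp⟩)
    (hdy : B.d (genr ⟨n + 1, by simp⟩) = 0)
    (hrestrict : ∀ a, B.d (inclTwo n a) = inclTwo n (A.d a)) {e e' : Aug B}
    {H' : FreeDGA n →ₗ[F2] F2}
    (hH' : IsHomotopy A (e.eps.comp (inclTwo n)) (e'.eps.comp (inclTwo n)) H') :
    ∃ H, IsHomotopy B e.eps e'.eps H := by
  obtain ⟨h'deg, h'd, h'mul⟩ := hH'
  let h := extendByTwo (fun p => H' (genr p)) 0
    (e.eps (genr ⟨n, by simp⟩) + e'.eps (genr ⟨n, by simp⟩))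
  let H := twistedDerivationOfGenr e.eps e'.eps h
  have hH : IsTwistedDerivation e.eps e'.eps H :=
    isTwistedDerivation_twistedDerivationOfGenr _ _ h
  have H_genr (q) : H (genr q) = h q := twistedDerivationOfGenr_genr ..
  have H_incl : H ∘ₗ (inclTwo n).toLinearMap = H' :=
    (hH.comp _).ext_genr h'mul fun p => by simp [H_genr, h]
  have H_genr_deg (q) (hq : H (genr q) ≠ 0) : B.deg q = -1 := by
    rw [H_genr] at hq
    induction q using Fin.castAdd_two_cases with
    | castAdd p =>
      have hp : H' (genr p) ≠ 0 := by simpa [h] using hq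
      rw [hdegcompat]
      simpa [wdeg] using not_imp_comm.mp (h'deg (FreeMonoid.of p)) hp
    | last_pred => simp [h] at hq
    | last =>
      have hx : e.eps (genr ⟨n, by simp⟩) ≠ 0 ∨ e'.eps (genr ⟨n, by simp⟩) ≠ 0 := by
        by_contra! hx
        simp [h, hx] at hq
      have hm : m = 0 := hdegx ▸ hx.elim e.deg_eq_zero e'.deg_eq_zero
      rw [hdegy, hm, zero_sub]
  refine ⟨H, fun w hw => ?_, hH.add_eq_map_d fun q => ?_, hH⟩
  · by_contra hne
    exact hw (hH.wdeg_eq_neg_one H_genr_deg hne)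
  · induction q using Fin.castAdd_two_cases with
    | castAdd p =>
      rw [← inclTwo_genr, hrestrict]
      exact (h'd _).trans (LinearMap.congr_fun H_incl _).symm
    | last_pred => rw [hdx, H_genr]; simp [h]
    | last => rw [hdy, map_zero, ← hdx, e.aug_d, e'.aug_d, add_zero]

end FreeDGA

/-- Two augmentations of a stabilization `S(A)` are chain homotopic iff their restrictions
to `A` are; together with surjectivity of restriction this gives a bijection between
homotopy classes of augmentations of `S(A)` and of `A`. -/
theorem stmt7 {n : ℕ} (m : ℤ) (A : DGA n) (B : DGA (n + 2))
    (hdegcompat : ∀ q : Fin n, B.deg (Fin.castAdd 2 q) = A.deg q)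
    (hdegx : B.deg ⟨n, by omega⟩ = m)
    (hdegy : B.deg ⟨n + 1, by omega⟩ = m - 1)
    (hdx : B.d (genr ⟨n, by omega⟩) = genr ⟨n + 1, by omega⟩)
    (hdy : B.d (genr ⟨n + 1, by omega⟩) = 0)
    (hrestrict : ∀ a : FreeDGA n, B.d (inclTwo n a) = inclTwo n (A.d a)) :
    (∀ e1 e2 : Aug B,
      (∃ H, IsHomotopy B e1.eps e2.eps H) ↔
        ∃ H' : FreeDGA n →ₗ[F2] F2,
          IsHomotopy A (e1.eps.comp (inclTwo n)) (e2.eps.comp (inclTwo n)) H') ∧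
    (∀ eA : Aug A, ∃ eS : Aug B, ∀ a : FreeDGA n, eS.eps (inclTwo n a) = eA.eps a) := by
  refine ⟨fun e1 e2 => ⟨fun ⟨H, hH⟩ => ⟨_, hH.comp_inclTwo hdegcompat hrestrict⟩,
    fun ⟨_, hH'⟩ => hH'.exists_of_comp_inclTwo hdegcompat hdegx hdegy hdx hdy hrestrict⟩,
    fun eA => ?_⟩
  obtain ⟨eS, heS⟩ := eA.exists_comp_inclTwo_eq hdegcompat hdx hdy hrestrict
  exact ⟨eS, AlgHom.congr_fun heS⟩
end
end
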